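/- arXiv:2507.01602 — 4 statements merged into one kernel-verified Lean document; each statement's English description precedes it below -/
import Mathlib

section
/- If a real random variable Δ on a finite probability space satisfies E[e^{-Δ}] = 1 and |Δ(x)| ≤ ε for all x, then the second moment satisfies |E[Δ²] − 2E[Δ]| ≤ e^{ε} ε³ / 3 (i.e., E[Δ²] = 2E[Δ] + O(Δ³)). -/
/-!
Subtracting the second-order Taylor polynomial of `e^{-Δ}` and averaging, the fluctuation
relation `E[e^{-Δ}] = 1` turns `E[Δ²] - 2 E[Δ]` into `-2 E[e^{-Δ} - (1 - Δ + Δ²/2)]`. The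
Lagrange-type bound `|e^t - ∑_{m<n} t^m/m!| ≤ e^{|t|} |t|^n / n!` at `n = 3` bounds each
remainder by `e^ε ε³ / 6`, hence so is their average.
-/

open Finset
open scoped Nat

theorem Real.abs_exp_sub_sum_range_le (t : ℝ) (n : ℕ) :
    |Real.exp t - ∑ m ∈ range n, t ^ m / m !| ≤ Real.exp |t| * |t| ^ n / n ! := by
  have hexp (s : ℝ) : HasSum (fun m ↦ s ^ m / m !) (Real.exp s) := by
    rw [Real.exp_eq_exp_ℝ]; exact NormedSpace.expSeries_div_hasSum_exp s
  have htail : HasSum (fun k ↦ t ^ (k + n) / (k + n)!)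
      (Real.exp t - ∑ m ∈ range n, t ^ m / m !) :=
    (hasSum_nat_add_iff' n).mpr (hexp t)
  have hmajorant : HasSum (fun k ↦ |t| ^ n / n ! * (|t| ^ k / k !))
      (|t| ^ n / n ! * Real.exp |t|) :=
    (hexp |t|).mul_left _
  refine (htail.norm_le_of_bounded hmajorant fun k ↦ ?_).trans_eq (by ring)
  have hfac : ((n ! * k ! : ℕ) : ℝ) ≤ (k + n)! := by
    rw [add_comm]
    exact_mod_cast Nat.le_of_dvd (Nat.factorial_pos _)
      (Nat.factorial_mul_factorial_dvd_factorial_add n k)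
  rw [Real.norm_eq_abs, abs_div, abs_pow, Nat.abs_cast, pow_add, div_mul_div_comm,
    mul_comm (|t| ^ n)]
  push_cast at hfac
  gcongr

theorem Real.abs_exp_neg_sub_quadratic_le (t : ℝ) :
    |Real.exp (-t) - (1 - t + t ^ 2 / 2)| ≤ Real.exp |t| * |t| ^ 3 / 6 := by
  have h := Real.abs_exp_sub_sum_range_le (-t) 3
  simp only [sum_range_succ, range_zero, sum_empty, abs_neg] at h
  norm_num [Nat.factorial] at h
  convert h using 3
  ring

theorem abs_sum_mul_le_of_abs_le {ι : Type*} (s : Finset ι) {w f : ι → ℝ} {B : ℝ}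
    (hw : ∀ i ∈ s, 0 ≤ w i) (hw₁ : ∑ i ∈ s, w i = 1) (hf : ∀ i ∈ s, |f i| ≤ B) :
    |∑ i ∈ s, w i * f i| ≤ B :=
  calc |∑ i ∈ s, w i * f i| ≤ ∑ i ∈ s, w i * |f i| := by
        refine (abs_sum_le_sum_abs _ _).trans_eq (sum_congr rfl fun i hi ↦ ?_)
        rw [abs_mul, abs_of_nonneg (hw i hi)]
    _ ≤ ∑ i ∈ s, w i * B := sum_le_sum fun i hi ↦ mul_le_mul_of_nonneg_left (hf i hi) (hw i hi)
    _ = B := by rw [← sum_mul, hw₁, one_mul]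

theorem stmt2_general {X : Type*} [Fintype X]
    (P : X → ℝ) (hnn : ∀ x, 0 ≤ P x) (hsum : ∑ x, P x = 1)
    (Δ : X → ℝ) (ε : ℝ) (hbd : ∀ x, |Δ x| ≤ ε)
    (hFT : ∑ x, P x * Real.exp (-Δ x) = 1) :
    |(∑ x, P x * (Δ x) ^ 2) - 2 * ∑ x, P x * Δ x| ≤ Real.exp ε * ε ^ 3 / 3 := by
  set R : X → ℝ := fun x ↦ Real.exp (-Δ x) - (1 - Δ x + Δ x ^ 2 / 2)
  have hR : ∀ x ∈ univ, |R x| ≤ Real.exp ε * ε ^ 3 / 6 := fun x _ ↦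
    (Real.abs_exp_neg_sub_quadratic_le (Δ x)).trans <| by gcongr <;> exact hbd x
  have hmoments : (∑ x, P x * Δ x ^ 2) - 2 * ∑ x, P x * Δ x = -2 * ∑ x, P x * R x := by
    simp only [R, mul_sub, mul_add, sum_sub_distrib, sum_add_distrib, mul_one, hFT, hsum,
      mul_div_assoc', ← sum_div]
    ring
  have hR_avg := abs_sum_mul_le_of_abs_le univ (fun x _ ↦ hnn x) hsum hR
  rw [hmoments, abs_mul, abs_neg, abs_two]
  linarith

/-- Second-moment relation from an integral fluctuation theorem: if E[e^{-Δ}] = 1 and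
|Δ| ≤ ε pointwise, then |E[Δ²] − 2E[Δ]| ≤ e^ε ε³ / 3. -/
theorem stmt2 {X : Type*} [Fintype X]
    (P : X → ℝ) (hnn : ∀ x, 0 ≤ P x) (hsum : ∑ x, P x = 1)
    (Δ : X → ℝ) (ε : ℝ) (hε : 0 < ε) (hbd : ∀ x, |Δ x| ≤ ε)
    (hFT : ∑ x, P x * Real.exp (-Δ x) = 1) :
    |(∑ x, P x * (Δ x) ^ 2) - 2 * ∑ x, P x * Δ x| ≤ Real.exp ε * ε ^ 3 / 3 :=
  stmt2_general P hnn hsum Δ ε hbd hFT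
end

section
/- Integral fluctuation theorem for total classical correlation: with notation as in the setup, define the forward path probability P^F[s,n,s',n'] = ∑ over trajectories of ∏_j K_j((s'_j,n'_j)|(s_j,n_j)) p(s) r(n), where the system starts in joint pmf p with marginals p_j, the environment starts in product pmf r(n) = ∏_j r_j(n_j), and each pair (site j of system, site j of environment) evolves jointly by a doubly-indexed stochastic (deterministic-reversible, i.e., permutation) kernel. Define Δι_cl = ln p(s) − ∑_j ln p_j(s_j) − (ln p'(s') − ∑_j ln p'_j(s'_j)), where p' is the final system pmf and p'_j its marginals, assuming all relevant probabilities are positive. Then the expectation E_{P^F}[e^{-Δι_cl}] = 1. -/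
/-- Marginal of a joint pmf on a finite product space at site `j`. -/
noncomputable def marg {N : ℕ} {X : Fin N → Type*}
    [∀ j, Fintype (X j)] [∀ j, DecidableEq (X j)]
    (p : (∀ j, X j) → ℝ) (j : Fin N) (a : X j) : ℝ :=
  ∑ x : ∀ i, X i, if x j = a then p x else 0

/-- Final system pmf after each system site `j` evolves jointly with its own environment
site by the permutation (deterministic reversible kernel) `π j`. -/
noncomputable def finalSys {N : ℕ} {S E : Fin N → Type*}
    [∀ j, Fintype (S j)] [∀ j, DecidableEq (S j)] [∀ j, Fintype (E j)]
    (p : (∀ j, S j) → ℝ) (r : ∀ j, E j → ℝ)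
    (π : ∀ j, (S j × E j) ≃ (S j × E j)) (s' : ∀ j, S j) : ℝ :=
  ∑ s : ∀ j, S j, ∑ n : ∀ j, E j,
    if ∀ j, (π j (s j, n j)).1 = s' j then p s * ∏ j, r j (n j) else 0

/-
`e^{-Δι_cl}` equals `(∏ⱼ pⱼ(sⱼ) / p(s)) · (p'(s') / ∏ⱼ p'ⱼ(s'ⱼ))`, so the factor `p(s)` of the path
weight cancels and the expectation becomes that of `p'(s') / ∏ⱼ p'ⱼ(s'ⱼ)` under the product
distribution `∏ⱼ pⱼ ⊗ rⱼ`. Since site `j` interacts only with its own environment, `πⱼ` carries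
`pⱼ ⊗ rⱼ` to a distribution whose system part is `p'ⱼ`; hence the product distribution is carried
to one whose system part is `∏ⱼ p'ⱼ`, and the expectation collapses to `∑ p' = 1`.
-/
open Finset

section ProductSums

variable {ι R : Type*} [Fintype ι] [DecidableEq ι] [CommSemiring R] {X : ι → Type*}
  [∀ i, Fintype (X i)]

theorem sum_prod_mul_apply (f : ∀ i, X i → R) (j : ι) (hf : ∀ i ≠ j, ∑ a, f i a = 1)
    (g : X j → R) :
    ∑ x : ∀ i, X i, (∏ i, f i (x i)) * g (x j) = ∑ a, f j a * g a := by
  have hrest : ∑ y : ∀ i : {i // i ≠ j}, X i, ∏ i, f i.1 (y i) = 1 := by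
    rw [← Fintype.prod_sum]
    exact Fintype.prod_eq_one _ fun i => hf i i.2
  calc ∑ x : ∀ i, X i, (∏ i, f i (x i)) * g (x j)
      = ∑ x : ∀ i, X i, f j (x j) * g (x j) * ∏ i : {i // i ≠ j}, f i (x i) := by
        refine sum_congr rfl fun x _ => ?_
        rw [Fintype.prod_eq_mul_prod_subtype_ne _ j]
        ring
    _ = ∑ a, ∑ y : ∀ i : {i // i ≠ j}, X i, f j a * g a * ∏ i, f i.1 (y i) := by
        rw [← Fintype.sum_prod_type']
        exact Fintype.sum_equiv (Equiv.piSplitAt j X) _ _ fun _ => rfl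
    _ = ∑ a, f j a * g a := by simp only [← mul_sum, hrest, mul_one]

theorem sum_prod_mul_comp_pi_map {Y : ι → Type*} [∀ i, Fintype (Y i)] [∀ i, DecidableEq (Y i)]
    (f : ∀ i, X i → R) (φ : ∀ i, X i → Y i) (G : (∀ i, Y i) → R) :
    ∑ x : ∀ i, X i, (∏ i, f i (x i)) * G (fun i => φ i (x i))
      = ∑ y : ∀ i, Y i, (∏ i, ∑ a, if φ i a = y i then f i a else 0) * G y := by
  symm
  calc ∑ y, (∏ i, ∑ a, if φ i a = y i then f i a else 0) * G y
      = ∑ y, ∑ x : ∀ i, X i, if (fun i => φ i (x i)) = y then (∏ i, f i (x i)) * G y else 0 := by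
        simp only [Fintype.prod_sum, prod_ite_zero, mem_univ, true_implies, sum_mul, ite_mul,
          zero_mul, funext_iff]
    _ = _ := by
        rw [sum_comm]
        simp only [sum_ite_eq, mem_univ, if_true]

theorem sum_pi_sum_pi_eq_sum_pi_prod {M : Type*} [AddCommMonoid M] {A B : ι → Type*}
    [∀ i, Fintype (A i)] [∀ i, Fintype (B i)] (H : (∀ i, A i × B i) → M) :
    ∑ a : ∀ i, A i, ∑ b : ∀ i, B i, H (fun i => (a i, b i)) = ∑ y, H y := by
  rw [← Fintype.sum_prod_type']
  exact Fintype.sum_equiv (Equiv.arrowProdEquivProdArrow ι A B).symm _ _ fun _ => rfl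

end ProductSums

section Marginals

variable {N : ℕ} {X : Fin N → Type*} [∀ j, Fintype (X j)] [∀ j, DecidableEq (X j)]

theorem sum_marg_mul (p : (∀ j, X j) → ℝ) (j : Fin N) (g : X j → ℝ) :
    ∑ a, marg p j a * g a = ∑ x, p x * g (x j) := by
  simp only [marg, sum_mul, ite_mul, zero_mul]
  rw [sum_comm]
  simp only [sum_ite_eq, mem_univ, if_true]

theorem marg_eq_sum_mul_ite (p : (∀ j, X j) → ℝ) (j : Fin N) (a : X j) :
    marg p j a = ∑ x, p x * if x j = a then 1 else 0 := by
  simp only [marg, mul_ite, mul_one, mul_zero]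

end Marginals

section FinalSystem

variable {N : ℕ} {S E : Fin N → Type*} [∀ j, Fintype (S j)] [∀ j, DecidableEq (S j)]
  [∀ j, Fintype (E j)]

theorem sum_finalSys_mul (p : (∀ j, S j) → ℝ) (r : ∀ j, E j → ℝ)
    (π : ∀ j, (S j × E j) ≃ (S j × E j)) (G : (∀ j, S j) → ℝ) :
    ∑ s', finalSys p r π s' * G s'
      = ∑ s : ∀ j, S j, ∑ n : ∀ j, E j,
          p s * (∏ j, r j (n j)) * G (fun j => (π j (s j, n j)).1) := by
  simp only [finalSys, sum_mul, ite_mul, zero_mul, ← funext_iff]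
  rw [sum_comm]
  refine sum_congr rfl fun s _ => ?_
  rw [sum_comm]
  simp only [sum_ite_eq, mem_univ, if_true]

theorem sum_finalSys (p : (∀ j, S j) → ℝ) (r : ∀ j, E j → ℝ) (hp : ∑ s, p s = 1)
    (hr : ∀ j, ∑ n, r j n = 1) (π : ∀ j, (S j × E j) ≃ (S j × E j)) :
    ∑ s', finalSys p r π s' = 1 := by
  simpa only [mul_one, ← mul_sum, ← Fintype.prod_sum, hr, prod_const_one, hp]
    using sum_finalSys_mul p r π fun _ => 1

theorem marg_finalSys (p : (∀ j, S j) → ℝ) (r : ∀ j, E j → ℝ) (hr : ∀ j, ∑ n, r j n = 1)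
    (π : ∀ j, (S j × E j) ≃ (S j × E j)) (j : Fin N) (a : S j) :
    marg (finalSys p r π) j a
      = ∑ y, if (π j y).1 = a then marg p j y.1 * r j y.2 else 0 := by
  set g : S j → E j → ℝ := fun c b => if (π j (c, b)).1 = a then 1 else 0
  calc marg (finalSys p r π) j a
      = ∑ s, p s * ∑ n : ∀ i, E i, (∏ i, r i (n i)) * g (s j) (n j) := by
        simp only [marg_eq_sum_mul_ite, sum_finalSys_mul, mul_sum, mul_assoc, g]
    _ = ∑ c, marg p j c * ∑ b, r j b * g c b := by
        simp only [sum_prod_mul_apply r j (fun i _ => hr i), sum_marg_mul]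
    _ = _ := by
        simp only [Fintype.sum_prod_type, mul_sum, g, mul_ite, mul_one, mul_zero]

end FinalSystem

section TotalCorrelation

variable {N : ℕ} {X : Fin N → Type*} [∀ j, Fintype (X j)] [∀ j, DecidableEq (X j)]

/-- The stochastic total correlation `ι_cl(x) = ln p(x) - ∑ⱼ ln pⱼ(xⱼ)`; the paper's `Δι_cl` is
its decrease from the initial to the final system distribution. -/
noncomputable def totalCorrelation (p : (∀ j, X j) → ℝ) (x : ∀ j, X j) : ℝ :=
  Real.log (p x) - ∑ j, Real.log (marg p j (x j))

theorem exp_totalCorrelation (p : (∀ j, X j) → ℝ) (x : ∀ j, X j) (hp : 0 < p x)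
    (hpj : ∀ j, 0 < marg p j (x j)) :
    Real.exp (totalCorrelation p x) = p x / ∏ j, marg p j (x j) := by
  rw [totalCorrelation, Real.exp_sub, Real.exp_log hp, Real.exp_sum]
  simp only [Real.exp_log (hpj _)]

end TotalCorrelation

theorem stmt7_general {N : ℕ} {S E : Fin N → Type*}
    [∀ j, Fintype (S j)] [∀ j, DecidableEq (S j)]
    [∀ j, Fintype (E j)]
    (p : (∀ j, S j) → ℝ) (r : ∀ j, E j → ℝ)
    (hp : ∀ s, 0 < p s) (hpsum : ∑ s, p s = 1)
    (hrsum : ∀ j, ∑ n, r j n = 1)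
    (π : ∀ j, (S j × E j) ≃ (S j × E j))
    (hp' : ∀ s', 0 < finalSys p r π s')
    (hpj : ∀ j a, 0 < marg p j a) (hpj' : ∀ j a, 0 < marg (finalSys p r π) j a) :
    ∑ s : ∀ j, S j, ∑ n : ∀ j, E j,
      (p s * ∏ j, r j (n j)) *
        Real.exp (-(Real.log (p s) - (∑ j, Real.log (marg p j (s j)))
          - (Real.log (finalSys p r π (fun j => (π j (s j, n j)).1))
            - ∑ j, Real.log (marg (finalSys p r π) j (π j (s j, n j)).1)))) = 1 := by
  set q : ∀ j, S j × E j → ℝ := fun j y => marg p j y.1 * r j y.2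
  set F : (∀ j, S j) → ℝ := fun s' => finalSys p r π s' / ∏ j, marg (finalSys p r π) j (s' j)
  have hweight (s s' : ∀ j, S j) (n : ∀ j, E j) :
      (p s * ∏ j, r j (n j)) *
          Real.exp (-(totalCorrelation p s - totalCorrelation (finalSys p r π) s'))
        = (∏ j, q j (s j, n j)) * F s' := by
    rw [neg_sub, Real.exp_sub, exp_totalCorrelation p s (hp s) fun j => hpj j _,
      exp_totalCorrelation (finalSys p r π) s' (hp' s') fun j => hpj' j _, prod_mul_distrib]
    have hmarg := (prod_pos fun j (_ : j ∈ univ) => hpj j (s j)).ne'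
    simp only [F]
    field_simp [(hp s).ne']
  calc _ = ∑ s : ∀ j, S j, ∑ n : ∀ j, E j,
          (∏ j, q j (s j, n j)) * F (fun j => (π j (s j, n j)).1) :=
        sum_congr rfl fun s _ => sum_congr rfl fun n _ => hweight s _ n
    _ = ∑ y : ∀ j, S j × E j, (∏ j, q j (y j)) * F (fun j => (π j (y j)).1) :=
        sum_pi_sum_pi_eq_sum_pi_prod fun y => (∏ j, q j (y j)) * F (fun j => (π j (y j)).1)
    _ = ∑ s', (∏ j, marg (finalSys p r π) j (s' j)) * F s' := by
        rw [sum_prod_mul_comp_pi_map q (fun j y => (π j y).1) F]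
        simp only [marg_finalSys p r hrsum, q]
    _ = ∑ s', finalSys p r π s' :=
        sum_congr rfl fun s' _ => mul_div_cancel₀ _ (prod_pos fun j _ => hpj' j (s' j)).ne'
    _ = 1 := sum_finalSys p r hpsum hrsum π

/-- Integral fluctuation theorem for the total classical correlation:
E_{P^F}[e^{-Δι_cl}] = 1. -/
theorem stmt7 {N : ℕ} {S E : Fin N → Type*}
    [∀ j, Fintype (S j)] [∀ j, DecidableEq (S j)]
    [∀ j, Fintype (E j)] [∀ j, DecidableEq (E j)]
    (p : (∀ j, S j) → ℝ) (r : ∀ j, E j → ℝ)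
    (hp : ∀ s, 0 < p s) (hpsum : ∑ s, p s = 1)
    (hr : ∀ j n, 0 ≤ r j n) (hrsum : ∀ j, ∑ n, r j n = 1)
    (π : ∀ j, (S j × E j) ≃ (S j × E j))
    (hp' : ∀ s', 0 < finalSys p r π s')
    (hpj : ∀ j a, 0 < marg p j a) (hpj' : ∀ j a, 0 < marg (finalSys p r π) j a) :
    ∑ s : ∀ j, S j, ∑ n : ∀ j, E j,
      (p s * ∏ j, r j (n j)) *
        Real.exp (-(Real.log (p s) - (∑ j, Real.log (marg p j (s j)))
          - (Real.log (finalSys p r π (fun j => (π j (s j, n j)).1))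
            - ∑ j, Real.log (marg (finalSys p r π) j (π j (s j, n j)).1)))) = 1 :=
  stmt7_general p r hp hpsum hrsum π hp' hpj hpj'
end

section
/- Reduction of quasiprobability to classical probability: if in addition the projectors Π_k commute with Π_s ⊗ 1 for all k, s (in particular if ρ_S is diagonal in the product basis defining Π_s and Π_k are its eigenprojectors built from the same basis), and similarly Π_{k'} commute with Π_{s'} ⊗ 1, then every value of the quasiprobability Q[k,s,n,k',s',n'] = Tr(U† Π_{k'}(Π_{s'}⊗Π_{n'}) U (Π_s⊗Π_n) Π_k ρ_S⊗ρ_E) is a nonnegative real number. -/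
open Matrix Kronecker ComplexOrder

/-- A resolution of the identity: a finite family of mutually orthogonal Hermitian
projectors summing to the identity. -/
def IsResolution {n ι : Type*} [Fintype n] [DecidableEq n] [Fintype ι] [DecidableEq ι]
    (P : ι → Matrix n n ℂ) : Prop :=
  (∀ a, (P a).IsHermitian) ∧ (∀ a b, P a * P b = if a = b then P a else 0) ∧
    (∑ a, P a = 1)

/-!
Both factors of the quasiprobability are positive semidefinite once the commutation
hypotheses are used to merge the projectors: `Q = Tr (M * N)` with `M = Uᴴ K U`, where
`K = (Π_{k'} Π_{s'}) ⊗ Π_{n'}` is a projector, and `N = B (ρ_S ⊗ ρ_E)`, where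
`B = (Π_s Π_k) ⊗ Π_n` is a projector commuting with the state, so that `N = B ρ B` is
positive semidefinite. The trace of a product of two positive semidefinite matrices is
nonnegative.
-/

section

open scoped MatrixOrder

variable {m n ι R 𝕜 : Type*} [Fintype m] [Fintype n]

theorem IsResolution.isStarProjection [DecidableEq n] [Fintype ι] [DecidableEq ι]
    {P : ι → Matrix n n ℂ} (hP : IsResolution P) (a : ι) : IsStarProjection (P a) :=
  isStarProjection_iff'.mpr ⟨by simpa using hP.2.1 a a, (hP.1 a).isSelfAdjoint⟩

theorem Commute.kronecker [CommSemiring R] {a a' : Matrix m m R} {b b' : Matrix n n R}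
    (ha : Commute a a') (hb : Commute b b') : Commute (a ⊗ₖ b) (a' ⊗ₖ b') := by
  simp only [Commute, SemiconjBy, ← mul_kronecker_mul, ha.eq, hb.eq]

theorem IsStarProjection.kronecker [CommSemiring R] [StarRing R] {p : Matrix m m R}
    {q : Matrix n n R} (hp : IsStarProjection p) (hq : IsStarProjection q) :
    IsStarProjection (p ⊗ₖ q) where
  isIdempotentElem := by
    rw [IsIdempotentElem, ← mul_kronecker_mul, hp.isIdempotentElem.eq,
      hq.isIdempotentElem.eq]
  isSelfAdjoint := by
    rw [IsSelfAdjoint, star_eq_conjTranspose, conjTranspose_kronecker,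
      ← star_eq_conjTranspose, ← star_eq_conjTranspose, hp.isSelfAdjoint.star_eq,
      hq.isSelfAdjoint.star_eq]

variable [RCLike 𝕜]

theorem Matrix.PosSemidef.mul_of_isStarProjection_of_commute {p A : Matrix n n 𝕜}
    (hA : A.PosSemidef) (hp : IsStarProjection p) (hpA : Commute p A) : (p * A).PosSemidef := by
  have hsandwich : p * A * pᴴ = p * A := by
    rw [← star_eq_conjTranspose, hp.isSelfAdjoint.star_eq, mul_assoc, ← hpA.eq, ← mul_assoc,
      hp.isIdempotentElem.eq]
  exact hsandwich ▸ hA.mul_mul_conjTranspose_same p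

theorem IsStarProjection.posSemidef [DecidableEq n] {p : Matrix n n 𝕜}
    (hp : IsStarProjection p) : p.PosSemidef :=
  hp.nonneg.posSemidef

theorem Matrix.PosSemidef.trace_mul_nonneg [DecidableEq n] {A B : Matrix n n 𝕜}
    (hA : A.PosSemidef) (hB : B.PosSemidef) : 0 ≤ (A * B).trace := by
  obtain ⟨X, rfl⟩ := CStarAlgebra.nonneg_iff_eq_star_mul_self.mp hB.nonneg
  rw [star_eq_conjTranspose, ← mul_assoc, trace_mul_cycle]
  exact (hA.mul_mul_conjTranspose_same X).trace_nonneg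

end

theorem stmt11_general {dS dE ι1 ι2 ι3 ι4 ι5 ι6 : Type*}
    [Fintype dS] [DecidableEq dS] [Fintype dE] [DecidableEq dE]
    [Fintype ι1] [DecidableEq ι1] [Fintype ι2] [DecidableEq ι2]
    [Fintype ι3] [DecidableEq ι3] [Fintype ι4] [DecidableEq ι4]
    [Fintype ι5] [DecidableEq ι5] [Fintype ι6] [DecidableEq ι6]
    (ρS : Matrix dS dS ℂ) (hρS : ρS.PosSemidef)
    (ρE : Matrix dE dE ℂ) (hρE : ρE.PosSemidef)
    (U : Matrix (dS × dE) (dS × dE) ℂ)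
    (Pk : ι1 → Matrix dS dS ℂ) (hk : IsResolution Pk)
    (Ps : ι2 → Matrix dS dS ℂ) (hs : IsResolution Ps)
    (Pn : ι3 → Matrix dE dE ℂ) (hn : IsResolution Pn)
    (Pk' : ι4 → Matrix dS dS ℂ) (hk' : IsResolution Pk')
    (Ps' : ι5 → Matrix dS dS ℂ) (hs' : IsResolution Ps')
    (Pn' : ι6 → Matrix dE dE ℂ) (hn' : IsResolution Pn')
    (hcomm : ∀ k s, Pk k * Ps s = Ps s * Pk k)
    (hcomm' : ∀ k' s', Pk' k' * Ps' s' = Ps' s' * Pk' k')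
    -- ρ_S is diagonal in the product basis defining Π_s and the Π_k are its
    -- eigenprojectors built from the same basis:
    (hρk : ∀ k, Pk k * ρS = ρS * Pk k)
    (hρs : ∀ s, Ps s * ρS = ρS * Ps s)
    -- the Π_n are non-invasive with respect to ρ_E:
    (hρn : ∀ n, Pn n * ρE = ρE * Pn n) :
    ∀ k s n k' s' n',
      ∃ q : ℝ, 0 ≤ q ∧
        (Uᴴ * (Pk' k' ⊗ₖ (1 : Matrix dE dE ℂ)) * (Ps' s' ⊗ₖ Pn' n') * U *
          (Ps s ⊗ₖ Pn n) * (Pk k ⊗ₖ (1 : Matrix dE dE ℂ)) * (ρS ⊗ₖ ρE)).trace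
          = (q : ℂ) := by
  intro k s n k' s' n'
  have hK : IsStarProjection ((Pk' k' * Ps' s') ⊗ₖ Pn' n') :=
    ((hk'.isStarProjection k').mul (hs'.isStarProjection s') (hcomm' k' s')).kronecker
      (hn'.isStarProjection n')
  have hB : IsStarProjection ((Ps s * Pk k) ⊗ₖ Pn n) :=
    ((hs.isStarProjection s).mul (hk.isStarProjection k) (hcomm k s).symm).kronecker
      (hn.isStarProjection n)
  have hBρ : Commute ((Ps s * Pk k) ⊗ₖ Pn n) (ρS ⊗ₖ ρE) :=
    (Commute.mul_left (hρs s) (hρk k)).kronecker (hρn n)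
  have hQ : (Uᴴ * (Pk' k' ⊗ₖ (1 : Matrix dE dE ℂ)) * (Ps' s' ⊗ₖ Pn' n') * U *
      (Ps s ⊗ₖ Pn n) * (Pk k ⊗ₖ (1 : Matrix dE dE ℂ)) * (ρS ⊗ₖ ρE)).trace =
      ((Uᴴ * ((Pk' k' * Ps' s') ⊗ₖ Pn' n') * U) *
        ((Ps s * Pk k) ⊗ₖ Pn n * (ρS ⊗ₖ ρE))).trace := by
    have hK_eq : Pk' k' ⊗ₖ (1 : Matrix dE dE ℂ) * Ps' s' ⊗ₖ Pn' n' =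
        (Pk' k' * Ps' s') ⊗ₖ Pn' n' := by
      rw [← mul_kronecker_mul, one_mul]
    have hB_eq : Ps s ⊗ₖ Pn n * Pk k ⊗ₖ (1 : Matrix dE dE ℂ) =
        (Ps s * Pk k) ⊗ₖ Pn n := by
      rw [← mul_kronecker_mul, mul_one]
    rw [← hK_eq, ← hB_eq]
    simp only [mul_assoc]
  obtain ⟨q, hq, hqQ⟩ := RCLike.nonneg_iff_exists_ofReal.mp <|
    (hK.posSemidef.conjTranspose_mul_mul_same U).trace_mul_nonneg
      ((hρS.kronecker hρE).mul_of_isStarProjection_of_commute hB hBρ)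
  exact ⟨q, hq, hQ.trans hqQ.symm⟩

/-- Reduction of the quasiprobability to a classical (two-point-measurement)
probability: if the projectors Π_k commute with Π_s ⊗ 1 (and the primed ones likewise),
then every value of Q is a nonnegative real number. -/
theorem stmt11 {dS dE ι1 ι2 ι3 ι4 ι5 ι6 : Type*}
    [Fintype dS] [DecidableEq dS] [Fintype dE] [DecidableEq dE]
    [Fintype ι1] [DecidableEq ι1] [Fintype ι2] [DecidableEq ι2]
    [Fintype ι3] [DecidableEq ι3] [Fintype ι4] [DecidableEq ι4]
    [Fintype ι5] [DecidableEq ι5] [Fintype ι6] [DecidableEq ι6]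
    (ρS : Matrix dS dS ℂ) (hρS : ρS.PosSemidef) (hρStr : ρS.trace = 1)
    (ρE : Matrix dE dE ℂ) (hρE : ρE.PosSemidef) (hρEtr : ρE.trace = 1)
    (U : Matrix (dS × dE) (dS × dE) ℂ) (hU : U ∈ Matrix.unitaryGroup (dS × dE) ℂ)
    (Pk : ι1 → Matrix dS dS ℂ) (hk : IsResolution Pk)
    (Ps : ι2 → Matrix dS dS ℂ) (hs : IsResolution Ps)
    (Pn : ι3 → Matrix dE dE ℂ) (hn : IsResolution Pn)
    (Pk' : ι4 → Matrix dS dS ℂ) (hk' : IsResolution Pk')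
    (Ps' : ι5 → Matrix dS dS ℂ) (hs' : IsResolution Ps')
    (Pn' : ι6 → Matrix dE dE ℂ) (hn' : IsResolution Pn')
    (hcomm : ∀ k s, Pk k * Ps s = Ps s * Pk k)
    (hcomm' : ∀ k' s', Pk' k' * Ps' s' = Ps' s' * Pk' k')
    -- ρ_S is diagonal in the product basis defining Π_s and the Π_k are its
    -- eigenprojectors built from the same basis:
    (hρk : ∀ k, Pk k * ρS = ρS * Pk k)
    (hρs : ∀ s, Ps s * ρS = ρS * Ps s)
    -- the Π_n are non-invasive with respect to ρ_E:
    (hρn : ∀ n, Pn n * ρE = ρE * Pn n) :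
    ∀ k s n k' s' n',
      ∃ q : ℝ, 0 ≤ q ∧
        (Uᴴ * (Pk' k' ⊗ₖ (1 : Matrix dE dE ℂ)) * (Ps' s' ⊗ₖ Pn' n') * U *
          (Ps s ⊗ₖ Pn n) * (Pk k ⊗ₖ (1 : Matrix dE dE ℂ)) * (ρS ⊗ₖ ρE)).trace
          = (q : ℂ) :=
  stmt11_general ρS hρS ρE hρE U Pk hk Ps hs Pn hn Pk' hk' Ps' hs' Pn' hn' hcomm hcomm' hρk hρs hρn
end

section
/- Static integral fluctuation theorem for coherence: let ρ = ∑_k p_k |k⟩⟨k| be a full-rank density matrix on a finite-dimensional Hilbert space, {|s⟩} an orthonormal basis with p̃_s = ⟨s|ρ|s⟩ > 0, and define the quasiprobability q(k,s) = ⟨s|k⟩⟨k|ρ|s⟩ and the stochastic coherence c(k,s) = ln p_k − ln p̃_s. Then ∑_{k,s} q(k,s) e^{-c(k,s)} = 1. -/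
open Matrix

/-!
Since `ρ` is diagonal in the basis `{|k⟩}`, `⟨k|ρ|s⟩ = p_k ⟨k|s⟩`, while
`e^{-c(k,s)} = p̃_s / p_k`. Hence each term of the sum is `p̃_s |⟨s|k⟩|²`; completeness of
`{|k⟩}` sums these over `k` to `p̃_s`, and completeness of `{|s⟩}` turns `∑_s p̃_s` into
`tr ρ = ∑_k p_k = 1`.
-/

section DotProduct

variable {R n ι : Type*} [CommSemiring R] [Fintype n] [Fintype ι]

theorem dotProduct_vecMulVec_mulVec (u a b v : n → R) :
    u ⬝ᵥ vecMulVec a b *ᵥ v = (u ⬝ᵥ a) * (b ⬝ᵥ v) := by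
  rw [vecMulVec_mulVec, op_smul_eq_smul, dotProduct_smul, smul_eq_mul, mul_comm]

variable [DecidableEq n] {e f : ι → n → R}

theorem sum_dotProduct_mul_dotProduct_of_sum_vecMulVec_eq_one
    (h : ∑ a, vecMulVec (e a) (f a) = 1) (u v : n → R) :
    ∑ a, (u ⬝ᵥ e a) * (f a ⬝ᵥ v) = u ⬝ᵥ v := by
  conv_rhs => rw [← one_mulVec v, ← h]
  simp only [sum_mulVec, dotProduct_sum, dotProduct_vecMulVec_mulVec]

theorem sum_dotProduct_mulVec_eq_trace_of_sum_vecMulVec_eq_one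
    (h : ∑ a, vecMulVec (e a) (f a) = 1) (M : Matrix n n R) :
    ∑ a, f a ⬝ᵥ M *ᵥ e a = M.trace := by
  conv_rhs => rw [← mul_one M, ← h]
  simp only [Finset.mul_sum, trace_sum, mul_vecMulVec, trace_vecMulVec, dotProduct_comm]

end DotProduct

section Biorthogonal

variable {R n ι : Type*} [CommSemiring R] [Fintype n] [Fintype ι] [DecidableEq ι]
  {e f : ι → n → R}

theorem dotProduct_sum_smul_vecMulVec_mulVec
    (horth : ∀ a b, f a ⬝ᵥ e b = if a = b then 1 else 0) (c : ι → R) (k : ι)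
    (v : n → R) :
    f k ⬝ᵥ (∑ j, c j • vecMulVec (e j) (f j)) *ᵥ v = c k * (f k ⬝ᵥ v) := by
  simp only [sum_mulVec, dotProduct_sum, smul_mulVec, dotProduct_smul,
    dotProduct_vecMulVec_mulVec, horth, smul_eq_mul, ite_mul, one_mul, zero_mul, mul_ite,
    mul_zero, Finset.sum_ite_eq, Finset.mem_univ, if_true]

theorem trace_sum_smul_vecMulVec (horth : ∀ a b, f a ⬝ᵥ e b = if a = b then 1 else 0)
    (c : ι → R) :
    (∑ j, c j • vecMulVec (e j) (f j)).trace = ∑ j, c j := by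
  simp only [trace_sum, trace_smul, trace_vecMulVec, dotProduct_comm (e _), horth, if_pos,
    smul_eq_mul, mul_one]

end Biorthogonal

theorem Complex.exp_neg_ofReal_log_sub_ofReal_log {a b : ℝ} (ha : 0 < a) (hb : 0 < b) :
    Complex.exp (-((Real.log a : ℂ) - (Real.log b : ℂ))) = ((b / a : ℝ) : ℂ) := by
  rw [neg_sub, ← Complex.ofReal_sub, ← Complex.ofReal_exp, Real.exp_sub, Real.exp_log ha,
    Real.exp_log hb]

/-- Static integral fluctuation theorem for coherence: for a full-rank density matrix
ρ = ∑_k p_k |k⟩⟨k| and an orthonormal basis {|s⟩} with diagonal entries p̃_s > 0, the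
Kirkwood–Dirac quasiprobability q(k,s) = ⟨s|k⟩⟨k|ρ|s⟩ and the stochastic coherence
c(k,s) = ln p_k − ln p̃_s satisfy ∑_{k,s} q(k,s) e^{-c(k,s)} = 1. -/
theorem stmt13 {d ι : Type*} [Fintype d] [DecidableEq d] [Fintype ι] [DecidableEq ι]
    (p : ι → ℝ) (hp : ∀ k, 0 < p k) (hpsum : ∑ k, p k = 1)
    (K : ι → d → ℂ)
    (hKorth : ∀ a b, star (K a) ⬝ᵥ K b = if a = b then 1 else 0)
    (hKcomplete : ∑ a, vecMulVec (K a) (star (K a)) = 1)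
    (S : ι → d → ℂ)
    (hSorth : ∀ a b, star (S a) ⬝ᵥ S b = if a = b then 1 else 0)
    (hScomplete : ∑ a, vecMulVec (S a) (star (S a)) = 1)
    (ρ : Matrix d d ℂ) (hspec : ρ = ∑ k, (p k : ℂ) • vecMulVec (K k) (star (K k)))
    (hdiag : ∀ s, 0 < (star (S s) ⬝ᵥ ρ *ᵥ S s).re) :
    ∑ k, ∑ s, (star (S s) ⬝ᵥ K k) * (star (K k) ⬝ᵥ ρ *ᵥ S s) *
      Complex.exp (-((Real.log (p k) : ℂ)
        - (Real.log ((star (S s) ⬝ᵥ ρ *ᵥ S s).re) : ℂ))) = 1 := by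
  have heigen : ∀ k v, star (K k) ⬝ᵥ ρ *ᵥ v = p k * (star (K k) ⬝ᵥ v) := by
    subst hspec
    exact dotProduct_sum_smul_vecMulVec_mulVec hKorth _
  have hterm : ∀ k s, (star (S s) ⬝ᵥ K k) * (star (K k) ⬝ᵥ ρ *ᵥ S s) *
      Complex.exp (-((Real.log (p k) : ℂ)
        - (Real.log ((star (S s) ⬝ᵥ ρ *ᵥ S s).re) : ℂ))) =
      ((star (S s) ⬝ᵥ ρ *ᵥ S s).re : ℂ) *
        ((star (S s) ⬝ᵥ K k) * (star (K k) ⬝ᵥ S s)) := by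
    intro k s
    have hpk : (p k : ℂ) ≠ 0 := Complex.ofReal_ne_zero.mpr (hp k).ne'
    rw [heigen, Complex.exp_neg_ofReal_log_sub_ofReal_log (hp k) (hdiag s), Complex.ofReal_div]
    field_simp
  calc _ = ∑ s, ((star (S s) ⬝ᵥ ρ *ᵥ S s).re : ℂ) *
          ∑ k, (star (S s) ⬝ᵥ K k) * (star (K k) ⬝ᵥ S s) := by
        simp_rw [hterm, Finset.mul_sum]
        exact Finset.sum_comm
    _ = ((∑ s, star (S s) ⬝ᵥ ρ *ᵥ S s).re : ℂ) := by
        simp only [sum_dotProduct_mul_dotProduct_of_sum_vecMulVec_eq_one hKcomplete, hSorth,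
          if_pos, mul_one, Complex.re_sum, Complex.ofReal_sum]
    _ = 1 := by
        rw [sum_dotProduct_mulVec_eq_trace_of_sum_vecMulVec_eq_one hScomplete, hspec,
          trace_sum_smul_vecMulVec hKorth, ← Complex.ofReal_sum, hpsum, Complex.ofReal_one,
          Complex.one_re, Complex.ofReal_one]
end
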